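/- arXiv:2112.00508 — 6 statements merged into one kernel-verified Lean document; each statement's English description precedes it below -/
import Mathlib

section
/- Let γ: ℝ²\{0} → ℝ⁺ be C² and positively one-homogeneous. Then for n ∈ S¹, the function F(n, n̂) = [γ(n̂)² - γ(n)² + 2γ(n)(ξ·n̂^⊥)(n·n̂^⊥)] / [γ(n)(n·n̂^⊥)²], defined for n̂ ∈ S¹ with n̂ ≠ ±n, has the limit lim_{n̂→n, n̂∈S¹} F(n, n̂) = (n^⊥)ᵀ H_γ(n) n^⊥ + |ξ|²/γ(n), where ξ = ∇γ(n) and H_γ(n) is the Hessian of γ at n. -/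
set_option maxHeartbeats 1000000

open Matrix

/-- Clockwise rotation by π/2. -/
noncomputable def perp (v : Fin 2 → ℝ) : Fin 2 → ℝ := ![v 1, -v 0]

/-- The limit of F(n, n̂) as n̂ → n on the unit circle equals
(n^⊥)ᵀ H_γ(n) n^⊥ + |ξ|²/γ(n). -/
theorem tendsto_F_of_unit (γ : (Fin 2 → ℝ) → ℝ)
    (hpos : ∀ p : Fin 2 → ℝ, p ≠ 0 → 0 < γ p)
    (hhom : ∀ c : ℝ, 0 < c → ∀ p : Fin 2 → ℝ, γ (c • p) = c * γ p)
    (hsmooth : ContDiffOn ℝ 2 γ ({0}ᶜ : Set (Fin 2 → ℝ)))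
    (n : Fin 2 → ℝ) (hn : n ⬝ᵥ n = 1)
    (ξ : Fin 2 → ℝ) (hξ : ∀ i, ξ i = fderiv ℝ γ n (Pi.single i 1))
    (H : Matrix (Fin 2) (Fin 2) ℝ)
    (hH : ∀ i j, H i j = fderiv ℝ (fun p => fderiv ℝ γ p (Pi.single j 1)) n (Pi.single i 1)) :
    Filter.Tendsto
      (fun m : Fin 2 → ℝ =>
        (γ m ^ 2 - γ n ^ 2 + 2 * γ n * (ξ ⬝ᵥ perp m) * (n ⬝ᵥ perp m)) /
          (γ n * (n ⬝ᵥ perp m) ^ 2))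
      (nhdsWithin n ({m : Fin 2 → ℝ | m ⬝ᵥ m = 1} \ {n, -n}))
      (nhds (perp n ⬝ᵥ H.mulVec (perp n) + (ξ ⬝ᵥ ξ) / γ n)) := by
  ----------------------------------------------------------------
  -- basic facts
  ----------------------------------------------------------------
  have hn' : n 0 ^ 2 + n 1 ^ 2 = 1 := by
    simpa [dotProduct, Fin.sum_univ_two, sq] using hn
  have hn0 : n ≠ 0 := by
    intro h
    rw [h] at hn'
    norm_num at hn'
  have g0pos : 0 < γ n := hpos n hn0
  have g0ne : γ n ≠ 0 := ne_of_gt g0pos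
  have hCD : ∀ x : Fin 2 → ℝ, x ≠ 0 → ContDiffAt ℝ 2 γ x := fun x hx =>
    hsmooth.contDiffAt (isOpen_compl_singleton.mem_nhds hx)
  have hdiff : ∀ x : Fin 2 → ℝ, x ≠ 0 → DifferentiableAt ℝ γ x := fun x hx =>
    (hCD x hx).differentiableAt (by norm_num)
  have hφ : ∀ x : Fin 2 → ℝ, x ≠ 0 → HasFDerivAt γ (fderiv ℝ γ x) x := fun x hx =>
    (hdiff x hx).hasFDerivAt
  have hφd : DifferentiableAt ℝ (fderiv ℝ γ) n :=
    ((hCD n hn0).fderiv_right (by norm_num : (1:WithTop ℕ∞) + 1 ≤ 2)).differentiableAt one_ne_zero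
  set Φ := fderiv ℝ (fderiv ℝ γ) n with hΦdef
  have hΦ : HasFDerivAt (fderiv ℝ γ) Φ n := hφd.hasFDerivAt
  have euler : fderiv ℝ γ n n = γ n := by
    have hc : HasDerivAt (fun t : ℝ => t • n) n 1 := by
      simpa using (hasDerivAt_id (1:ℝ)).smul_const n
    have h2 : HasFDerivAt γ (fderiv ℝ γ n) ((fun t : ℝ => t • n) 1) := by
      simpa using hφ n hn0
    have h1 : HasDerivAt (fun t : ℝ => γ (t • n)) (fderiv ℝ γ n n) 1 :=
      h2.comp_hasDerivAt 1 hc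
    have hmul : HasDerivAt (fun t : ℝ => t * γ n) (γ n) 1 := by
      simpa using (hasDerivAt_id (1:ℝ)).mul_const (γ n)
    have h3 : HasDerivAt (fun t : ℝ => γ (t • n)) (γ n) 1 := by
      apply hmul.congr_of_eventuallyEq
      filter_upwards [eventually_gt_nhds (by norm_num : (0:ℝ) < 1)] with t ht
      exact hhom t ht n
    exact h1.unique h3
  have vdec : ∀ v : Fin 2 → ℝ,
      v = v 0 • (Pi.single 0 1 : Fin 2 → ℝ) + v 1 • (Pi.single 1 1 : Fin 2 → ℝ) := by
    intro v; funext i; fin_cases i <;> simp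
  have hlin : ∀ v : Fin 2 → ℝ, fderiv ℝ γ n v = v 0 * ξ 0 + v 1 * ξ 1 := by
    intro v
    rw [hξ 0, hξ 1]
    conv_lhs => rw [vdec v]
    simp
  have hξdot : ∀ v : Fin 2 → ℝ, ξ ⬝ᵥ v = fderiv ℝ γ n v := by
    intro v
    rw [hlin v]
    simp [dotProduct, Fin.sum_univ_two]
    ring
  set p : Fin 2 → ℝ := perp n with hpdef
  have hp0 : p 0 = n 1 := rfl
  have hp1 : p 1 = -(n 0) := rfl
  have hξn : ξ ⬝ᵥ n = γ n := by rw [hξdot n]; exact euler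
  set ξp : ℝ := ξ ⬝ᵥ p with hξpdef
  have hξp' : fderiv ℝ γ n p = ξp := (hξdot p).symm
  ----------------------------------------------------------------
  -- Hessian and dot-product algebra
  ----------------------------------------------------------------
  have hHij : ∀ i j, H i j = Φ (Pi.single i 1) (Pi.single j 1) := by
    intro i j
    rw [hH i j]
    have hder : HasFDerivAt (fun m => fderiv ℝ γ m (Pi.single j 1))
        ((fderiv ℝ γ n).comp (0 : (Fin 2 → ℝ) →L[ℝ] (Fin 2 → ℝ)) + Φ.flip (Pi.single j 1)) n :=
      hΦ.clm_apply (hasFDerivAt_const (Pi.single j 1) n)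
    rw [hder.fderiv]
    simp
  have hΦpp : Φ p p = p ⬝ᵥ H.mulVec p := by
    have hr : p ⬝ᵥ H.mulVec p =
        p 0 * (H 0 0 * p 0 + H 0 1 * p 1) + p 1 * (H 1 0 * p 0 + H 1 1 * p 1) := by
      simp [Matrix.mulVec, dotProduct, Fin.sum_univ_two]
    have hl : Φ p p = p 0 * p 0 * Φ (Pi.single 0 1) (Pi.single 0 1)
        + p 0 * p 1 * Φ (Pi.single 0 1) (Pi.single 1 1)
        + p 1 * p 0 * Φ (Pi.single 1 1) (Pi.single 0 1)
        + p 1 * p 1 * Φ (Pi.single 1 1) (Pi.single 1 1) := by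
      conv_lhs => rw [vdec p]
      simp [ContinuousLinearMap.add_apply, ContinuousLinearMap.smul_apply, map_add,
        _root_.map_smul]
      ring
    rw [hl, hr, hHij 0 0, hHij 0 1, hHij 1 0, hHij 1 1]
    ring
  have hlag : ∀ v : Fin 2 → ℝ, (v ⬝ᵥ n)^2 + (v ⬝ᵥ p)^2 = v ⬝ᵥ v := by
    intro v
    simp [dotProduct, Fin.sum_univ_two, hp0, hp1]
    linear_combination (v 0^2 + v 1^2) * hn'
  have hdecomp : ∀ m : Fin 2 → ℝ, (m ⬝ᵥ n) • n + (m ⬝ᵥ p) • p = m := by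
    intro m
    funext i
    fin_cases i
    · simp [dotProduct, Fin.sum_univ_two, hp0, hp1]
      linear_combination m 0 * hn'
    · simp [dotProduct, Fin.sum_univ_two, hp0, hp1]
      linear_combination m 1 * hn'
  have hτ0 : ∀ m : Fin 2 → ℝ, n ⬝ᵥ perp m = -(m ⬝ᵥ p) := by
    intro m
    simp [perp, dotProduct, Fin.sum_univ_two, hp0, hp1]
    ring
  have hξξ : ξ ⬝ᵥ ξ = γ n^2 + ξp^2 := by
    have := hlag ξ
    rw [hξn, ← hξpdef] at this
    linarith
  ----------------------------------------------------------------
  -- the curve c(b) = √(1-b²) n + b p and 1D calculus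
  ----------------------------------------------------------------
  set q : ℝ → ℝ := fun b => Real.sqrt (1 - b^2) with hqdef
  set c : ℝ → (Fin 2 → ℝ) := fun b => q b • n + b • p with hcdef
  have hq_pos : ∀ b : ℝ, b^2 < 1 → 0 < q b := fun b hb => Real.sqrt_pos.mpr (by linarith)
  have hq_sq : ∀ b : ℝ, b^2 < 1 → q b ^ 2 = 1 - b^2 := fun b hb => Real.sq_sqrt (by linarith)
  have hcapp : ∀ b i, c b i = q b * n i + b * p i := by
    intro b i; simp [hcdef]
  have hc0 : ∀ b, (c b) 0 = q b * n 0 + b * n 1 := by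
    intro b; rw [hcapp, hp0]
  have hc1 : ∀ b, (c b) 1 = q b * n 1 - b * n 0 := by
    intro b; rw [hcapp, hp1]; ring
  have hcne : ∀ b : ℝ, b^2 < 1 → c b ≠ 0 := by
    intro b hb h0
    have h00 : (c b) 0 = 0 := by rw [h0]; rfl
    have h11 : (c b) 1 = 0 := by rw [h0]; rfl
    rw [hc0] at h00
    rw [hc1] at h11
    have hq2 := hq_sq b hb
    have : (0:ℝ) = 1 := by nlinarith [hn']
    norm_num at this
  have hqd : ∀ b : ℝ, b^2 < 1 → HasDerivAt q (-b / q b) b := by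
    intro b hb
    have h1 : HasDerivAt (fun t : ℝ => 1 - t^2) (-(2*b)) b := by
      simpa using ((hasDerivAt_pow 2 b).const_sub 1)
    have h2 := h1.sqrt (by nlinarith : 1 - b^2 ≠ 0)
    convert h2 using 1
    rw [show Real.sqrt (1 - b^2) = q b from rfl]
    have := (hq_pos b hb).ne'
    field_simp
  have hcd : ∀ b : ℝ, b^2 < 1 → HasDerivAt c ((-b / q b) • n + p) b := by
    intro b hb
    have := ((hqd b hb).smul_const n).add ((hasDerivAt_id b).smul_const p)
    refine this.congr_deriv ?_; simp
  have hgd : ∀ b : ℝ, b^2 < 1 →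
      HasDerivAt (fun t => γ (c t)) (fderiv ℝ γ (c b) ((-b / q b) • n + p)) b := by
    intro b hb
    exact (hφ (c b) (hcne b hb)).comp_hasDerivAt b (hcd b hb)
  have hq0 : q 0 = 1 := by simp [hqdef]
  have hc00 : c 0 = n := by simp [hcdef, hq0]
  have hc'00 : (-(0:ℝ) / q 0) • n + p = p := by simp
  set ch : ℝ → ℝ := fun b => γ (c b)^2 - γ n^2 - 2*γ n*ξp*(b*q b) + 2*γ n^2*b^2 with hchdef
  set cf : ℝ → ℝ := fun b => 2*γ (c b)*(fderiv ℝ γ (c b) ((-b / q b) • n + p))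
      - 2*γ n*ξp*(q b + b*(-b/q b)) + 4*γ n^2*b with hcfdef
  have hhd : ∀ b : ℝ, b^2 < 1 → HasDerivAt ch (cf b) b := by
    intro b hb
    have t1 : HasDerivAt (fun t => γ (c t)^2)
        (2*γ (c b)*(fderiv ℝ γ (c b) ((-b/q b) • n + p))) b := by
      have := (hgd b hb).pow 2
      refine this.congr_deriv ?_
      push_cast
      ring
    have t2 : HasDerivAt (fun t => 2*γ n*ξp*(t*q t)) (2*γ n*ξp*(q b + b*(-b/q b))) b := by
      have := ((hasDerivAt_id b).mul (hqd b hb)).const_mul (2*γ n*ξp)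
      refine this.congr_deriv ?_
      simp only [id_eq]
      ring
    have t3 : HasDerivAt (fun t : ℝ => 2*γ n^2*t^2) (4*γ n^2*b) b := by
      have := (hasDerivAt_pow 2 b).const_mul (2*γ n^2)
      refine this.congr_deriv ?_
      push_cast
      ring
    have := ((t1.sub_const (γ n^2)).sub t2).add t3
    exact this
  have hr : HasDerivAt (fun b : ℝ => -b / q b) (-1) 0 := by
    have hneg : HasDerivAt (fun b : ℝ => -b) (-1) 0 := by
      exact (hasDerivAt_id (0:ℝ)).neg
    have := hneg.div (hqd 0 (by norm_num)) (by rw [hq0]; norm_num)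
    refine this.congr_deriv ?_
    rw [hq0]
    norm_num
  have hg0 : HasDerivAt (fun t => γ (c t)) ξp 0 := by
    have := hgd 0 (by norm_num)
    rwa [hc'00, hc00, hξp'] at this
  have hφc : HasDerivAt (fun b => fderiv ℝ γ (c b)) (Φ p) 0 := by
    have h0 : HasFDerivAt (fderiv ℝ γ) Φ (c 0) := by rw [hc00]; exact hΦ
    have hcp : HasDerivAt c p 0 := by
      have := hcd 0 (by norm_num)
      rwa [hc'00] at this
    exact h0.comp_hasDerivAt 0 hcp
  have hcd' : HasDerivAt (fun b : ℝ => (-b / q b) • n + p) (-n) 0 := by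
    have := (hr.smul_const n).add_const p
    simpa using this
  have hw : HasDerivAt (fun b => fderiv ℝ γ (c b) ((-b/q b) • n + p)) (Φ p p - γ n) 0 := by
    have := hφc.clm_apply hcd'
    refine this.congr_deriv ?_
    rw [hc'00, hc00, map_neg, euler]
    ring
  have hq0d : HasDerivAt q 0 0 := by
    have := hqd 0 (by norm_num)
    convert this using 1
    rw [hq0]
    norm_num
  set K : ℝ := 2*ξp^2 + 2*γ n*(Φ p p) + 2*γ n^2 with hKdef
  have hfK : HasDerivAt cf K 0 := by
    have hA : HasDerivAt (fun b => 2*γ (c b)) (2*ξp) 0 := by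
      exact hg0.const_mul (2:ℝ)
    have t1 := hA.mul hw
    have hbq : HasDerivAt (fun b : ℝ => b * (-b / q b)) 0 0 := by
      have := (hasDerivAt_id (0:ℝ)).mul hr
      refine this.congr_deriv ?_
      rw [hq0]
      norm_num
    have t2 : HasDerivAt (fun b : ℝ => 2*γ n*ξp*(q b + b*(-b/q b))) 0 0 := by
      have := (hq0d.add hbq).const_mul (2*γ n*ξp)
      refine this.congr_deriv ?_
      norm_num
    have t3 : HasDerivAt (fun b : ℝ => 4*γ n^2*b) (4*γ n^2) 0 := by
      simpa using (hasDerivAt_id (0:ℝ)).const_mul (4*γ n^2)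
    have hcomb := (t1.sub t2).add t3
    refine hcomb.congr_deriv ?_
    rw [hc'00, hc00, hξp', hKdef]
    ring
  have hcf0 : cf 0 = 0 := by
    have : cf 0 = 2*γ (c 0)*(fderiv ℝ γ (c 0) ((-(0:ℝ) / q 0) • n + p))
        - 2*γ n*ξp*(q 0 + 0*(-0/q 0)) + 4*γ n^2*0 := rfl
    rw [this, hc'00, hc00, hξp', hq0]
    ring
  have hslope : Filter.Tendsto (fun b => cf b / b) (nhdsWithin 0 {(0:ℝ)}ᶜ) (nhds K) := by
    have := hasDerivAt_iff_tendsto_slope.mp hfK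
    refine this.congr fun b => ?_
    rw [slope_def_field, hcf0, sub_zero, sub_zero]
  have hquot : Filter.Tendsto (fun b => cf b / (2*γ n*b)) (nhdsWithin 0 {(0:ℝ)}ᶜ)
      (nhds (K / (2*γ n))) := by
    have := hslope.div_const (2*γ n)
    refine this.congr fun b => ?_
    rw [div_div, mul_comm b (2*γ n)]
  have hIoo : Set.Ioo (-1:ℝ) 1 ∈ nhdsWithin (0:ℝ) {(0:ℝ)}ᶜ :=
    nhdsWithin_le_nhds (Ioo_mem_nhds (by norm_num) (by norm_num))
  have hmemsq : ∀ b ∈ Set.Ioo (-1:ℝ) 1, b^2 < 1 := by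
    intro b hb
    nlinarith [hb.1, hb.2]
  have h1d : Filter.Tendsto (fun b => ch b / (γ n * b^2)) (nhdsWithin 0 {(0:ℝ)}ᶜ)
      (nhds (K/(2*γ n))) := by
    apply HasDerivAt.lhopital_zero_nhdsNE (f' := cf) (g' := fun b => 2*γ n*b)
    · exact Filter.eventually_of_mem hIoo fun b hb => hhd b (hmemsq b hb)
    · refine Filter.Eventually.of_forall fun b => ?_
      have := (hasDerivAt_pow 2 b).const_mul (γ n)
      refine this.congr_deriv ?_
      push_cast
      ring
    · refine Filter.eventually_of_mem self_mem_nhdsWithin fun b hb => ?_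
      exact mul_ne_zero (mul_ne_zero two_ne_zero g0ne) hb
    · have hch0 : ch 0 = 0 := by
        have : ch 0 = γ (c 0)^2 - γ n^2 - 2*γ n*ξp*(0*q 0) + 2*γ n^2*0^2 := rfl
        rw [this, hc00]
        ring
      have hcont : Filter.Tendsto ch (nhds 0) (nhds 0) := by
        have := (hhd 0 (by norm_num)).continuousAt.tendsto
        rwa [hch0] at this
      exact hcont.mono_left nhdsWithin_le_nhds
    · have hcont : Filter.Tendsto (fun b : ℝ => γ n * b^2) (nhds 0) (nhds (γ n * 0^2)) := by
        apply Continuous.tendsto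
        fun_prop
      simp only [ne_eq, OfNat.ofNat_ne_zero, not_false_eq_true, zero_pow, mul_zero] at hcont
      exact hcont.mono_left nhdsWithin_le_nhds
    · exact hquot
  ----------------------------------------------------------------
  -- transfer from the circle to the 1D parameter
  ----------------------------------------------------------------
  set S : Set (Fin 2 → ℝ) := {m : Fin 2 → ℝ | m ⬝ᵥ m = 1} \ {n, -n} with hSdef
  have hτcont : Continuous (fun m : Fin 2 → ℝ => m ⬝ᵥ p) := by
    have : (fun m : Fin 2 → ℝ => m ⬝ᵥ p) = fun m => m 0 * p 0 + m 1 * p 1 := by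
      funext m
      simp [dotProduct, Fin.sum_univ_two]
    rw [this]
    fun_prop
  have hnp : n ⬝ᵥ p = 0 := by
    simp [dotProduct, Fin.sum_univ_two, hp0, hp1]
    ring
  have hτ : Filter.Tendsto (fun m : Fin 2 → ℝ => m ⬝ᵥ p) (nhdsWithin n S)
      (nhdsWithin 0 {(0:ℝ)}ᶜ) := by
    rw [tendsto_nhdsWithin_iff]
    constructor
    · have := hτcont.tendsto n
      rw [hnp] at this
      exact this.mono_left nhdsWithin_le_nhds
    · filter_upwards [self_mem_nhdsWithin] with m hm
      intro h0
      have hm1 : m ⬝ᵥ m = 1 := hm.1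
      have hm2 : m ∉ ({n, -n} : Set (Fin 2 → ℝ)) := hm.2
      have hsq : (m ⬝ᵥ n)^2 = 1 := by
        have := hlag m
        rw [h0, hm1] at this
        linarith
      have hdec : (m ⬝ᵥ n) • n = m := by
        have := hdecomp m
        rwa [h0, zero_smul, add_zero] at this
      have hfac : (m ⬝ᵥ n - 1) * (m ⬝ᵥ n + 1) = 0 := by linear_combination hsq
      rcases mul_eq_zero.mp hfac with h | h
      · have : m = n := by
          rw [← hdec, show m ⬝ᵥ n = 1 by linarith, one_smul]
        exact hm2 (by rw [this]; exact Set.mem_insert n {-n})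
      · have : m = -n := by
          rw [← hdec, show m ⬝ᵥ n = -1 by linarith]
          funext i
          simp
        exact hm2 (by rw [this]; exact Set.mem_insert_of_mem n rfl)
  have hposn : ∀ᶠ m in nhdsWithin n S, 0 < m ⬝ᵥ n := by
    have hcontn : Continuous (fun m : Fin 2 → ℝ => m ⬝ᵥ n) := by
      have : (fun m : Fin 2 → ℝ => m ⬝ᵥ n) = fun m => m 0 * n 0 + m 1 * n 1 := by
        funext m
        simp [dotProduct, Fin.sum_univ_two]
      rw [this]
      fun_prop
    have h1 : ∀ᶠ y in nhds (n ⬝ᵥ n), (0:ℝ) < y :=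
      eventually_gt_nhds (by rw [hn]; norm_num)
    exact ((hcontn.tendsto n).eventually h1).filter_mono nhdsWithin_le_nhds
  have hgen : ∀ b : ℝ, ξ ⬝ᵥ perp (c b) = q b * (ξ ⬝ᵥ p) - b * (ξ ⬝ᵥ n) := by
    intro b
    simp only [perp, dotProduct, Fin.sum_univ_two, Matrix.cons_val_zero,
      Matrix.cons_val_one, Matrix.head_cons, hc0, hc1, hp0, hp1]
    ring
  have heqF : (fun m : Fin 2 → ℝ =>
      (γ m ^ 2 - γ n ^ 2 + 2 * γ n * (ξ ⬝ᵥ perp m) * (n ⬝ᵥ perp m)) /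
          (γ n * (n ⬝ᵥ perp m) ^ 2))
      =ᶠ[nhdsWithin n S]
      (fun m : Fin 2 → ℝ => ch (m ⬝ᵥ p) / (γ n * (m ⬝ᵥ p)^2)) := by
    filter_upwards [hposn, self_mem_nhdsWithin] with m hmpos hmS
    have hqb : q (m ⬝ᵥ p) = m ⬝ᵥ n := by
      have h1 : 1 - (m ⬝ᵥ p)^2 = (m ⬝ᵥ n)^2 := by
        have := hlag m
        rw [hmS.1] at this
        linarith
      show Real.sqrt (1 - (m ⬝ᵥ p)^2) = m ⬝ᵥ n
      rw [h1]
      exact Real.sqrt_sq hmpos.le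
    have hkey : c (m ⬝ᵥ p) = m := by
      show q (m ⬝ᵥ p) • n + (m ⬝ᵥ p) • p = m
      rw [hqb]
      exact hdecomp m
    have hξperp : ξ ⬝ᵥ perp m = q (m ⬝ᵥ p) * ξp - (m ⬝ᵥ p) * γ n := by
      conv_lhs => rw [← hkey]
      rw [hgen (m ⬝ᵥ p), hξn, ← hξpdef]
    simp only [hchdef]
    rw [hkey, hτ0 m, hξperp]
    ring
  have hcomp : Filter.Tendsto (fun m : Fin 2 → ℝ => ch (m ⬝ᵥ p) / (γ n * (m ⬝ᵥ p)^2))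
      (nhdsWithin n S) (nhds (K/(2*γ n))) := h1d.comp hτ
  have hfin := hcomp.congr' heqF.symm
  have hval : K/(2*γ n) = p ⬝ᵥ H.mulVec p + (ξ ⬝ᵥ ξ) / γ n := by
    rw [hKdef, hξξ, ← hΦpp]
    field_simp
    ring
  rw [hval] at hfin
  exact hfin
end

section
/- Suppose for each n ∈ S¹ the matrix Z_k(n) = γ(n)I₂ - nξᵀ - ξnᵀ + k(n)nnᵀ satisfies γ(n)[(n̂^⊥)ᵀ Z_k(n) n̂^⊥] ≥ γ(n̂)² for all n̂ ∈ S¹, where γ > 0. Then Z_k(n) is positive definite, and consequently k(n) = Tr(Z_k(n)) > 0. -/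
open Matrix

/-- If the stability inequality holds at n, then Z_k(n) is positive definite and
k(n) = Tr(Z_k(n)) > 0. -/
theorem Zmat_posDef_of_stability (γ : (Fin 2 → ℝ) → ℝ)
    (ξ : (Fin 2 → ℝ) → Fin 2 → ℝ) (k : (Fin 2 → ℝ) → ℝ)
    (hpos : ∀ n : Fin 2 → ℝ, n ⬝ᵥ n = 1 → 0 < γ n)
    (hEuler : ∀ n : Fin 2 → ℝ, n ⬝ᵥ n = 1 → ξ n ⬝ᵥ n = γ n)
    (n : Fin 2 → ℝ) (hn : n ⬝ᵥ n = 1)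
    (hineq : ∀ m : Fin 2 → ℝ, m ⬝ᵥ m = 1 →
      γ m ^ 2 ≤ γ n * (perp m ⬝ᵥ
        (γ n • (1 : Matrix (Fin 2) (Fin 2) ℝ) - vecMulVec n (ξ n) - vecMulVec (ξ n) n
          + k n • vecMulVec n n).mulVec (perp m))) :
    (γ n • (1 : Matrix (Fin 2) (Fin 2) ℝ) - vecMulVec n (ξ n) - vecMulVec (ξ n) n
        + k n • vecMulVec n n).PosDef ∧
    (γ n • (1 : Matrix (Fin 2) (Fin 2) ℝ) - vecMulVec n (ξ n) - vecMulVec (ξ n) n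
        + k n • vecMulVec n n).trace = k n ∧
    0 < k n := by
  set Z : Matrix (Fin 2) (Fin 2) ℝ :=
    γ n • (1 : Matrix (Fin 2) (Fin 2) ℝ) - vecMulVec n (ξ n) - vecMulVec (ξ n) n
      + k n • vecMulVec n n with hZ
  have hγn : 0 < γ n := hpos n hn
  have key : ∀ v : Fin 2 → ℝ, v ⬝ᵥ v = 1 → 0 < v ⬝ᵥ Z *ᵥ v := by
    intro v hv
    set m : Fin 2 → ℝ := ![-v 1, v 0] with hm
    have hv' : v 0 * v 0 + v 1 * v 1 = 1 := by
      simpa [dotProduct, Fin.sum_univ_two] using hv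
    have hmm : m ⬝ᵥ m = 1 := by
      simp [hm, dotProduct, Fin.sum_univ_two]
      nlinarith
    have hpm : perp m = v := by
      funext i
      fin_cases i <;> simp [perp, hm]
    have h := hineq m hmm
    rw [hpm] at h
    have hγm : 0 < γ m := hpos m hmm
    nlinarith
  have hpd : Z.PosDef := by
    refine posDef_iff_dotProduct_mulVec.mpr ⟨?_, ?_⟩
    · show Zᴴ = Z
      ext i j
      fin_cases i <;> fin_cases j <;>
        simp [hZ, vecMulVec_apply, Matrix.one_apply] <;> ring
    · intro x hx
      have h0 : x ⬝ᵥ x ≠ 0 := fun h => hx (dotProduct_self_eq_zero.mp h)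
      have hnn : 0 ≤ x ⬝ᵥ x :=
        Finset.sum_nonneg fun i _ => mul_self_nonneg (x i)
      have hxx : 0 < x ⬝ᵥ x := lt_of_le_of_ne hnn (Ne.symm h0)
      set c : ℝ := Real.sqrt (x ⬝ᵥ x) with hc
      have hcpos : 0 < c := Real.sqrt_pos.mpr hxx
      have hc2 : c * c = x ⬝ᵥ x := Real.mul_self_sqrt hnn
      set v : Fin 2 → ℝ := c⁻¹ • x with hvdef
      have hv : v ⬝ᵥ v = 1 := by
        rw [hvdef, smul_dotProduct, dotProduct_smul, smul_eq_mul, smul_eq_mul, ← hc2]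
        field_simp
      have h2 := key v hv
      rw [hvdef, mulVec_smul, smul_dotProduct, dotProduct_smul, smul_eq_mul,
        smul_eq_mul] at h2
      have hinv : 0 < c⁻¹ := inv_pos.mpr hcpos
      have hq : x ⬝ᵥ Z *ᵥ x = (c * c) * (c⁻¹ * (c⁻¹ * (x ⬝ᵥ Z *ᵥ x))) := by
        field_simp
      have : 0 < x ⬝ᵥ Z *ᵥ x := hq ▸ mul_pos (mul_pos hcpos hcpos) h2
      simpa using this
  have htr : Z.trace = k n := by
    have he : ξ n 0 * n 0 + ξ n 1 * n 1 = γ n := by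
      simpa [dotProduct, Fin.sum_univ_two] using hEuler n hn
    have hn' : n 0 * n 0 + n 1 * n 1 = 1 := by
      simpa [dotProduct, Fin.sum_univ_two] using hn
    simp [hZ, Matrix.trace, Matrix.diag, Fin.sum_univ_two, vecMulVec_apply,
      Matrix.one_apply, smul_eq_mul]
    linear_combination (-2 : ℝ) * he + k n * hn'
  refine ⟨hpd, htr, ?_⟩
  have h0 := key ![1, 0] (by simp [dotProduct, Fin.sum_univ_two])
  have h1 := key ![0, 1] (by simp [dotProduct, Fin.sum_univ_two])
  have hd0 : (0:ℝ) < Z 0 0 := by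
    simpa [dotProduct, mulVec, Fin.sum_univ_two] using h0
  have hd1 : (0:ℝ) < Z 1 1 := by
    simpa [dotProduct, mulVec, Fin.sum_univ_two] using h1
  have : Z.trace = Z 0 0 + Z 1 1 := by
    simp [Matrix.trace, Matrix.diag, Fin.sum_univ_two]
  linarith [htr ▸ this ▸ (add_pos hd0 hd1)]
end

section
/- Let γ₁, γ₂: S¹ → ℝ⁺ with Cahn-Hoffman vectors ξ₁, ξ₂, and let k₁, k₂: S¹ → ℝ be such that γᵢ(n)[(n̂^⊥)ᵀ Z^{(i)}_{kᵢ}(n) n̂^⊥] ≥ γᵢ(n̂)² for all n, n̂ ∈ S¹ and i = 1,2, where Z^{(i)}_{kᵢ}(n) = γᵢ(n)I₂ - ξᵢnᵀ - nξᵢᵀ + kᵢ(n)nnᵀ. Then for γ = γ₁ + γ₂, ξ = ξ₁ + ξ₂, and k = k₁ + k₂, one has γ(n)[(n̂^⊥)ᵀ Z_k(n) n̂^⊥] ≥ γ(n̂)² for all n, n̂ ∈ S¹; hence the minimal stabilizing function for γ satisfies k₀ ≤ k₁ + k₂ (subadditivity). -/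
/-!
`Z_k(n)` is affine in `(γ(n), ξ(n), k(n))`, so the quadratic forms of the two problems add, and
the two inequalities `γᵢ(n) Qᵢ ≥ γᵢ(n̂)²` combine by Cauchy–Schwarz. For `k₀ ≤ k`: wherever
`n · n̂^⊥ ≠ 0` the stability inequality rearranges to `F(n, n̂) ≤ k(n)`; where `n · n̂^⊥ = 0`,
`F(n, n̂) = 0` by the division convention, and `k(n) ≥ γ(n) > 0`.
-/

open Matrix

/-- The surface energy matrix Z_k(n) = g I₂ - ξ nᵀ - n ξᵀ + k n nᵀ. -/
noncomputable def Zmat (g : ℝ) (xi nv : Fin 2 → ℝ) (k : ℝ) : Matrix (Fin 2) (Fin 2) ℝ :=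
  g • (1 : Matrix (Fin 2) (Fin 2) ℝ) - vecMulVec xi nv - vecMulVec nv xi + k • vecMulVec nv nv

/-- The function F(n, n̂) built from γ and the Cahn-Hoffman vector ξ. -/
noncomputable def Ffun (γ : (Fin 2 → ℝ) → ℝ) (ξ : (Fin 2 → ℝ) → Fin 2 → ℝ)
    (n m : Fin 2 → ℝ) : ℝ :=
  (γ m ^ 2 - γ n ^ 2 + 2 * γ n * (ξ n ⬝ᵥ perp m) * (n ⬝ᵥ perp m)) /
    (γ n * (n ⬝ᵥ perp m) ^ 2)

/-- The minimal stabilizing function. -/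
noncomputable def kmin (γ : (Fin 2 → ℝ) → ℝ) (ξ : (Fin 2 → ℝ) → Fin 2 → ℝ)
    (n : Fin 2 → ℝ) : ℝ :=
  sSup (Ffun γ ξ n '' {m : Fin 2 → ℝ | m ⬝ᵥ m = 1 ∧ 0 ≤ m ⬝ᵥ n})

def IsStable (γ : (Fin 2 → ℝ) → ℝ) (ξ : (Fin 2 → ℝ) → Fin 2 → ℝ) (k : (Fin 2 → ℝ) → ℝ) :
    Prop :=
  ∀ n m : Fin 2 → ℝ, n ⬝ᵥ n = 1 → m ⬝ᵥ m = 1 →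
    γ m ^ 2 ≤ γ n * (perp m ⬝ᵥ (Zmat (γ n) (ξ n) n (k n)).mulVec (perp m))

lemma perp_perp (v : Fin 2 → ℝ) : perp (perp v) = -v := by
  ext i
  fin_cases i <;> simp [perp]

lemma perp_dotProduct_perp (v : Fin 2 → ℝ) : perp v ⬝ᵥ perp v = v ⬝ᵥ v := by
  simp [perp, dotProduct, Fin.sum_univ_two, add_comm]

lemma dotProduct_Zmat_mulVec (g : ℝ) (xi nv p : Fin 2 → ℝ) (k : ℝ) :
    p ⬝ᵥ (Zmat g xi nv k).mulVec p
      = g * (p ⬝ᵥ p) - 2 * (xi ⬝ᵥ p) * (nv ⬝ᵥ p) + k * (nv ⬝ᵥ p) ^ 2 := by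
  simp [Zmat, dotProduct, mulVec, vecMulVec, Matrix.one_apply, Fin.sum_univ_two]
  ring

lemma Zmat_add (g₁ g₂ : ℝ) (xi₁ xi₂ nv : Fin 2 → ℝ) (k₁ k₂ : ℝ) :
    Zmat (g₁ + g₂) (xi₁ + xi₂) nv (k₁ + k₂) = Zmat g₁ xi₁ nv k₁ + Zmat g₂ xi₂ nv k₂ := by
  simp only [Zmat, add_smul, add_vecMulVec, vecMulVec_add]
  abel

/-- Cauchy–Schwarz `√(c₁Q₁) + √(c₂Q₂) ≤ √((c₁+c₂)(Q₁+Q₂))`, squared. -/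
lemma sq_add_le_mul_add_of_sq_le_mul {a₁ a₂ c₁ c₂ Q₁ Q₂ : ℝ} (hc₁ : 0 < c₁) (hc₂ : 0 < c₂)
    (h₁ : a₁ ^ 2 ≤ c₁ * Q₁) (h₂ : a₂ ^ 2 ≤ c₂ * Q₂) :
    (a₁ + a₂) ^ 2 ≤ (c₁ + c₂) * (Q₁ + Q₂) := by
  have hc : 0 < c₁ * c₂ := mul_pos hc₁ hc₂
  refine le_of_mul_le_mul_left ?_ hc
  calc c₁ * c₂ * (a₁ + a₂) ^ 2
      = (c₁ + c₂) * (c₂ * a₁ ^ 2 + c₁ * a₂ ^ 2) - (c₂ * a₁ - c₁ * a₂) ^ 2 := by ring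
    _ ≤ (c₁ + c₂) * (c₂ * (c₁ * Q₁) + c₁ * (c₂ * Q₂)) := by
      nlinarith [sq_nonneg (c₂ * a₁ - c₁ * a₂), mul_le_mul_of_nonneg_left h₁ hc₂.le,
        mul_le_mul_of_nonneg_left h₂ hc₁.le]
    _ = c₁ * c₂ * ((c₁ + c₂) * (Q₁ + Q₂)) := by ring

namespace IsStable

variable {γ γ₁ γ₂ : (Fin 2 → ℝ) → ℝ} {ξ ξ₁ ξ₂ : (Fin 2 → ℝ) → Fin 2 → ℝ}
  {k k₁ k₂ : (Fin 2 → ℝ) → ℝ}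

theorem add (h₁ : IsStable γ₁ ξ₁ k₁) (h₂ : IsStable γ₂ ξ₂ k₂)
    (hpos₁ : ∀ n : Fin 2 → ℝ, n ⬝ᵥ n = 1 → 0 < γ₁ n)
    (hpos₂ : ∀ n : Fin 2 → ℝ, n ⬝ᵥ n = 1 → 0 < γ₂ n) :
    IsStable (γ₁ + γ₂) (ξ₁ + ξ₂) (k₁ + k₂) := by
  intro n m hn hm
  simp only [Pi.add_apply, Zmat_add, add_mulVec, dotProduct_add]
  exact sq_add_le_mul_add_of_sq_le_mul (hpos₁ n hn) (hpos₂ n hn)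
    (h₁ n m hn hm) (h₂ n m hn hm)

/-- Testing the inequality at `n̂ = n^⊥`, where Euler's relation `ξ(n)·n = γ(n)` reduces the
quadratic form to `k(n) - γ(n)`. -/
theorem apply_le_apply (h : IsStable γ ξ k) {n : Fin 2 → ℝ} (hn : n ⬝ᵥ n = 1) (hpos : 0 < γ n)
    (heuler : ξ n ⬝ᵥ n = γ n) : γ n ≤ k n := by
  have hm : perp n ⬝ᵥ perp n = 1 := by rw [perp_dotProduct_perp, hn]
  have key := h n (perp n) hn hm
  rw [perp_perp, dotProduct_Zmat_mulVec] at key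
  simp only [dotProduct_neg, neg_dotProduct, neg_neg, hn, heuler] at key
  nlinarith [sq_nonneg (γ (perp n))]

theorem kmin_le (h : IsStable γ ξ k) {n : Fin 2 → ℝ} (hn : n ⬝ᵥ n = 1) (hpos : 0 < γ n)
    (heuler : ξ n ⬝ᵥ n = γ n) : kmin γ ξ n ≤ k n := by
  refine csSup_le ⟨_, n, ⟨hn, hn ▸ zero_le_one⟩, rfl⟩ ?_
  rintro _ ⟨m, ⟨hm, -⟩, rfl⟩
  by_cases hc : n ⬝ᵥ perp m = 0
  · simpa [Ffun, hc] using hpos.le.trans (h.apply_le_apply hn hpos heuler)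
  · have key := h n m hn hm
    rw [dotProduct_Zmat_mulVec, perp_dotProduct_perp, hm] at key
    rw [Ffun, div_le_iff₀ (by positivity)]
    linarith

end IsStable

/-- Subadditivity: if k₁, k₂ satisfy the stability inequality for γ₁, γ₂ respectively,
then k₁ + k₂ satisfies it for γ₁ + γ₂; hence k₀ ≤ k₁ + k₂ for γ = γ₁ + γ₂. -/
theorem stability_subadditive (γ₁ γ₂ : (Fin 2 → ℝ) → ℝ)
    (ξ₁ ξ₂ : (Fin 2 → ℝ) → Fin 2 → ℝ) (k₁ k₂ : (Fin 2 → ℝ) → ℝ)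
    (hpos₁ : ∀ n : Fin 2 → ℝ, n ⬝ᵥ n = 1 → 0 < γ₁ n)
    (hpos₂ : ∀ n : Fin 2 → ℝ, n ⬝ᵥ n = 1 → 0 < γ₂ n)
    (hEuler₁ : ∀ n : Fin 2 → ℝ, n ⬝ᵥ n = 1 → ξ₁ n ⬝ᵥ n = γ₁ n)
    (hEuler₂ : ∀ n : Fin 2 → ℝ, n ⬝ᵥ n = 1 → ξ₂ n ⬝ᵥ n = γ₂ n)
    (hineq₁ : ∀ n m : Fin 2 → ℝ, n ⬝ᵥ n = 1 → m ⬝ᵥ m = 1 →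
      γ₁ m ^ 2 ≤ γ₁ n * (perp m ⬝ᵥ (Zmat (γ₁ n) (ξ₁ n) n (k₁ n)).mulVec (perp m)))
    (hineq₂ : ∀ n m : Fin 2 → ℝ, n ⬝ᵥ n = 1 → m ⬝ᵥ m = 1 →
      γ₂ m ^ 2 ≤ γ₂ n * (perp m ⬝ᵥ (Zmat (γ₂ n) (ξ₂ n) n (k₂ n)).mulVec (perp m))) :
    (∀ n m : Fin 2 → ℝ, n ⬝ᵥ n = 1 → m ⬝ᵥ m = 1 →
      (γ₁ m + γ₂ m) ^ 2 ≤ (γ₁ n + γ₂ n) *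
        (perp m ⬝ᵥ (Zmat (γ₁ n + γ₂ n) (fun i => ξ₁ n i + ξ₂ n i) n
          (k₁ n + k₂ n)).mulVec (perp m))) ∧
    (∀ n : Fin 2 → ℝ, n ⬝ᵥ n = 1 →
      kmin (fun p => γ₁ p + γ₂ p) (fun p i => ξ₁ p i + ξ₂ p i) n ≤ k₁ n + k₂ n) := by
  have hstable : IsStable (γ₁ + γ₂) (ξ₁ + ξ₂) (k₁ + k₂) :=
    IsStable.add hineq₁ hineq₂ hpos₁ hpos₂
  refine ⟨hstable, fun n hn => hstable.kmin_le hn ?_ ?_⟩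
  · exact add_pos (hpos₁ n hn) (hpos₂ n hn)
  · simp only [Pi.add_apply, add_dotProduct, hEuler₁ n hn, hEuler₂ n hn]
end

section
/- Let G be a 2×2 symmetric positive definite matrix and γ(p) = √(pᵀGp) the Riemannian-like metric anisotropy. For n ∈ S¹, with ξ = ∇γ(n) = γ(n)⁻¹Gn and k₁(n) = γ(n)⁻¹Tr(G), the surface energy matrix satisfies Z_{k₁}(n) = γ(n)I₂ - ξnᵀ - nξᵀ + k₁(n)nnᵀ = γ(n)⁻¹ Jᵀ G J, where J = [[0,-1],[1,0]]. -/
open Matrix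

/-- The Riemannian-like metric anisotropy: for k₁(n) = γ(n)⁻¹ Tr(G) the surface energy
matrix equals γ(n)⁻¹ Jᵀ G J. -/
theorem riemannian_Zmat_eq (G : Matrix (Fin 2) (Fin 2) ℝ) (hG : G.PosDef)
    (n : Fin 2 → ℝ) (hn : n ⬝ᵥ n = 1) :
    (Real.sqrt (n ⬝ᵥ G.mulVec n)) • (1 : Matrix (Fin 2) (Fin 2) ℝ)
      - vecMulVec ((Real.sqrt (n ⬝ᵥ G.mulVec n))⁻¹ • G.mulVec n) n
      - vecMulVec n ((Real.sqrt (n ⬝ᵥ G.mulVec n))⁻¹ • G.mulVec n)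
      + ((Real.sqrt (n ⬝ᵥ G.mulVec n))⁻¹ * G.trace) • vecMulVec n n
    = (Real.sqrt (n ⬝ᵥ G.mulVec n))⁻¹ •
        ((!![0, -1; 1, 0] : Matrix (Fin 2) (Fin 2) ℝ)ᵀ * G * !![0, -1; 1, 0]) := by
  have hn0 : n ≠ 0 := by
    intro h; rw [h] at hn; simp at hn
  have hpos : 0 < n ⬝ᵥ G.mulVec n := by simpa using hG.dotProduct_mulVec_pos hn0
  set γ := Real.sqrt (n ⬝ᵥ G.mulVec n) with hγ
  have hγpos : 0 < γ := Real.sqrt_pos.mpr hpos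
  have hγne : γ ≠ 0 := ne_of_gt hγpos
  have hγsq : γ * γ = n ⬝ᵥ G.mulVec n := Real.mul_self_sqrt hpos.le
  have hsym : G 1 0 = G 0 1 := by
    have := hG.1
    have h := congrFun (congrFun this.symm 1) 0
    simpa using h
  have hn' : n 0 * n 0 + n 1 * n 1 = 1 := by
    simpa [dotProduct, Fin.sum_univ_two] using hn
  have hg : γ * γ = n 0 * (G 0 0 * n 0 + G 0 1 * n 1) + n 1 * (G 1 0 * n 0 + G 1 1 * n 1) := by
    rw [hγsq]; simp [dotProduct, mulVec, Fin.sum_univ_two]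
  ext i j
  fin_cases i <;> fin_cases j <;>
    simp only [Matrix.add_apply, Matrix.sub_apply, Matrix.smul_apply, vecMulVec_apply] <;>
    simp [vecMulVec_apply, mulVec, dotProduct, Fin.sum_univ_two, trace,
      Matrix.one_apply, Matrix.mul_apply, Matrix.vecHead, Matrix.vecTail,
      Matrix.transpose_apply] <;>
    field_simp
  · linear_combination hg + n 0 * n 1 * hsym + G 1 1 * hn'
  · linear_combination -G 1 0 * hn' + n 1 ^ 2 * hsym
  · linear_combination -G 0 1 * hn' - n 0 ^ 2 * hsym
  · linear_combination hg - n 0 * n 1 * hsym + G 0 0 * hn'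
end

section
/- Let γ: S¹ → ℝ⁺ and suppose the symmetric positive definite matrices Z(n) satisfy γ(n)·[(n̂^⊥)ᵀ Z(n) n̂^⊥] ≥ γ(n̂)² and τᵀZ(n)τ = γ(n) for τ = n^⊥, for all n, n̂ ∈ S¹. Then for any nonzero vectors h, ĥ ∈ ℝ² with unit normals n = -h^⊥/|h|, n̂ = -ĥ^⊥/|ĥ|, one has ĥᵀZ(n)ĥ/(2|h|) + γ(n)|h|/2 ≥ γ(n̂)|ĥ|. -/
open Matrix

/-- The per-edge energy dissipation estimate: for edge vectors h, ĥ with unit normals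
n = -h^⊥/|h| and n̂ = -ĥ^⊥/|ĥ|, one has ĥᵀ Z(n) ĥ/(2|h|) + γ(n)|h|/2 ≥ γ(n̂)|ĥ|. -/
theorem edge_energy_estimate (γ : (Fin 2 → ℝ) → ℝ)
    (Z : (Fin 2 → ℝ) → Matrix (Fin 2) (Fin 2) ℝ)
    (hpos : ∀ n : Fin 2 → ℝ, n ⬝ᵥ n = 1 → 0 < γ n)
    (hposdef : ∀ n : Fin 2 → ℝ, n ⬝ᵥ n = 1 → (Z n).PosDef)
    (hineq : ∀ n m : Fin 2 → ℝ, n ⬝ᵥ n = 1 → m ⬝ᵥ m = 1 →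
      γ m ^ 2 ≤ γ n * (perp m ⬝ᵥ (Z n).mulVec (perp m)))
    (htau : ∀ n : Fin 2 → ℝ, n ⬝ᵥ n = 1 → perp n ⬝ᵥ (Z n).mulVec (perp n) = γ n)
    (h g : Fin 2 → ℝ) (hh : h ≠ 0) (hg : g ≠ 0) :
    γ (-(Real.sqrt (g ⬝ᵥ g))⁻¹ • perp g) * Real.sqrt (g ⬝ᵥ g) ≤
      (g ⬝ᵥ (Z (-(Real.sqrt (h ⬝ᵥ h))⁻¹ • perp h)).mulVec g) / (2 * Real.sqrt (h ⬝ᵥ h))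
        + γ (-(Real.sqrt (h ⬝ᵥ h))⁻¹ • perp h) * Real.sqrt (h ⬝ᵥ h) / 2 := by
  have key : ∀ v : Fin 2 → ℝ, v ≠ 0 → 0 < v ⬝ᵥ v := by
    intro v hv
    have hne : v 0 ≠ 0 ∨ v 1 ≠ 0 := by
      by_contra hc
      push_neg at hc
      apply hv
      funext i
      fin_cases i <;> simp [hc.1, hc.2]
    simp only [dotProduct, Fin.sum_univ_two]
    rcases hne with h1 | h1 <;>
      nlinarith [mul_self_pos.mpr h1, mul_self_nonneg (v 0), mul_self_nonneg (v 1)]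
  have hunit : ∀ v : Fin 2 → ℝ, v ≠ 0 →
      (-(Real.sqrt (v ⬝ᵥ v))⁻¹ • perp v) ⬝ᵥ (-(Real.sqrt (v ⬝ᵥ v))⁻¹ • perp v) = 1 := by
    intro v hv
    have h1 := key v hv
    have h2 : Real.sqrt (v ⬝ᵥ v) * Real.sqrt (v ⬝ᵥ v) = v ⬝ᵥ v :=
      Real.mul_self_sqrt h1.le
    have h3 : Real.sqrt (v ⬝ᵥ v) ≠ 0 := by positivity
    simp only [dotProduct, Fin.sum_univ_two] at h2 ⊢
    simp only [perp, Pi.smul_apply, smul_eq_mul, Matrix.cons_val_zero, Matrix.cons_val_one,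
      Matrix.head_cons]
    field_simp
    rw [Real.sq_sqrt (by positivity), show v 0 ^ 2 + v 1 ^ 2 = v 0 * v 0 + v 1 * v 1 by ring]
    have h1' : 0 < v 0 * v 0 + v 1 * v 1 := by
      simpa [dotProduct, Fin.sum_univ_two] using h1
    rw [div_eq_one_iff_eq (ne_of_gt h1')]
    ring
  set H := Real.sqrt (h ⬝ᵥ h) with hHdef
  set G := Real.sqrt (g ⬝ᵥ g) with hGdef
  have hHpos : 0 < H := Real.sqrt_pos.mpr (key h hh)
  have hGpos : 0 < G := Real.sqrt_pos.mpr (key g hg)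
  have hG2 : G * G = g ⬝ᵥ g := Real.mul_self_sqrt (key g hg).le
  set n : Fin 2 → ℝ := -H⁻¹ • perp h with hndef
  set m : Fin 2 → ℝ := -G⁻¹ • perp g with hmdef
  have hn1 : n ⬝ᵥ n = 1 := hunit h hh
  have hm1 : m ⬝ᵥ m = 1 := hunit g hg
  have hγn : 0 < γ n := hpos n hn1
  have hγm : 0 < γ m := hpos m hm1
  -- perp m = G⁻¹ • g
  have hpm : perp m = G⁻¹ • g := by
    funext i
    fin_cases i <;>
      simp [hmdef, perp, Pi.smul_apply, smul_eq_mul] <;> ring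
  set a : ℝ := perp m ⬝ᵥ (Z n).mulVec (perp m) with hadef
  have hquad : g ⬝ᵥ (Z n).mulVec g = G * G * a := by
    rw [hadef, hpm]
    rw [Matrix.mulVec_smul, smul_dotProduct, dotProduct_smul]
    simp only [smul_eq_mul]
    field_simp
  have hag : γ m ^ 2 ≤ γ n * a := hineq n m hn1 hm1
  -- main AM-GM step
  have step : 2 * H * (γ m * G) ≤ G * G * a + γ n * (H * H) := by
    nlinarith [sq_nonneg (G * γ m - γ n * H), mul_le_mul_of_nonneg_left hag (mul_self_nonneg G),
      mul_pos hHpos hγn, sq_nonneg (γ m), hγn, hγm, hHpos, hGpos]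
  have hcomb : G * G * a / (2 * H) + γ n * H / 2 = (G * G * a + γ n * (H * H)) / (2 * H) := by
    field_simp
  rw [hquad, hcomb, le_div_iff₀ (by positivity)]
  nlinarith [step]
end

section
/- For the l^r-norm anisotropy γ(n) = (|n₁|^r + |n₂|^r)^{1/r} with r ≥ 2, the nonzero eigenvalue of the Hessian H_γ(n) of the one-homogeneous extension at n ∈ S¹ with n₁n₂ ≠ 0 is λ(n) = (r-1)|n₁n₂|^{r-2}/γ(n)^{2r-1} ≥ 0; in particular the l^r-norm anisotropy is weakly anisotropic. -/
open Matrix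

/-- The one-homogeneous extension of the l^r-norm anisotropy. -/
noncomputable def gamlr (r : ℝ) (p : Fin 2 → ℝ) : ℝ := (|p 0| ^ r + |p 1| ^ r) ^ r⁻¹

lemma abs_rpow_hasDerivAt {r x : ℝ} (hx : x ≠ 0) :
    HasDerivAt (fun y : ℝ => |y| ^ r) (r * (|x| ^ (r - 2) * x)) x := by
  have ha : (0:ℝ) < |x| := abs_pos.mpr hx
  have h := (Real.hasDerivAt_rpow_const (p := r) (Or.inl ha.ne')).comp x (hasDerivAt_abs hx)
  refine h.congr_deriv ?_
  have h1 : |x| ^ (r - 1) = |x| ^ (r - 2) * |x| := by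
    rw [← Real.rpow_add_one ha.ne']; ring_nf
  rw [h1]
  rcases hx.lt_or_gt with h | h
  · rw [_root_.sign_neg h, abs_of_neg h]; push_cast [SignType.coe_one]; ring
  · rw [sign_pos h, abs_of_pos h]; push_cast [SignType.coe_one]; ring

lemma sgnpow_hasDerivAt {r x : ℝ} (hx : x ≠ 0) :
    HasDerivAt (fun y : ℝ => |y| ^ (r - 2) * y) ((r - 1) * |x| ^ (r - 2)) x := by
  have ha : (0:ℝ) < |x| := abs_pos.mpr hx
  have h := ((Real.hasDerivAt_rpow_const (p := r - 2) (Or.inl ha.ne')).comp x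
    (hasDerivAt_abs hx)).mul (hasDerivAt_id x)
  refine h.congr_deriv ?_
  have h1 : |x| ^ (r - 2) = |x| ^ (r - 2 - 1) * |x| := by
    rw [← Real.rpow_add_one ha.ne']; ring_nf
  simp only [Function.comp, id_eq]
  rcases hx.lt_or_gt with h | h
  · rw [_root_.sign_neg h]; push_cast [SignType.coe_one]
    rw [abs_of_neg h] at h1 ⊢; rw [h1]; ring
  · rw [sign_pos h]; push_cast [SignType.coe_one]
    rw [abs_of_pos h] at h1 ⊢; rw [h1]; ring

/-- The projection onto the i-th coordinate as a continuous linear map. -/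
noncomputable def pr (i : Fin 2) : (Fin 2 → ℝ) →L[ℝ] ℝ :=
  ContinuousLinearMap.proj i

lemma spos {r : ℝ} {p : Fin 2 → ℝ} (h0 : p 0 ≠ 0) (h1 : p 1 ≠ 0) :
    0 < |p 0| ^ r + |p 1| ^ r :=
  add_pos (Real.rpow_pos_of_pos (abs_pos.2 h0) r) (Real.rpow_pos_of_pos (abs_pos.2 h1) r)

lemma hasFDerivAt_S {r : ℝ} {p : Fin 2 → ℝ} (h0 : p 0 ≠ 0) (h1 : p 1 ≠ 0) :
    HasFDerivAt (fun q : Fin 2 → ℝ => |q 0| ^ r + |q 1| ^ r)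
      ((r * (|p 0| ^ (r - 2) * p 0)) • pr 0 + (r * (|p 1| ^ (r - 2) * p 1)) • pr 1) p := by
  exact ((abs_rpow_hasDerivAt h0).comp_hasFDerivAt p ((pr 0).hasFDerivAt)).add
    ((abs_rpow_hasDerivAt h1).comp_hasFDerivAt p ((pr 1).hasFDerivAt))

lemma hasFDerivAt_gam {r : ℝ} {p : Fin 2 → ℝ} (h0 : p 0 ≠ 0) (h1 : p 1 ≠ 0) :
    HasFDerivAt (gamlr r)
      ((r⁻¹ * (|p 0| ^ r + |p 1| ^ r) ^ (r⁻¹ - 1)) •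
        ((r * (|p 0| ^ (r - 2) * p 0)) • pr 0 + (r * (|p 1| ^ (r - 2) * p 1)) • pr 1)) p := by
  have := (Real.hasDerivAt_rpow_const (p := r⁻¹) (Or.inl (spos h0 h1).ne')).comp_hasFDerivAt p
    (hasFDerivAt_S (r := r) h0 h1)
  exact this

lemma fderiv_gam_apply {r : ℝ} (hr0 : r ≠ 0) {p : Fin 2 → ℝ} (h0 : p 0 ≠ 0) (h1 : p 1 ≠ 0)
    (j : Fin 2) :
    fderiv ℝ (gamlr r) p (Pi.single j 1)
      = (|p 0| ^ r + |p 1| ^ r) ^ (r⁻¹ - 1) * (|p j| ^ (r - 2) * p j) := by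
  rw [(hasFDerivAt_gam h0 h1).fderiv]
  simp only [pr, ContinuousLinearMap.smul_apply, ContinuousLinearMap.add_apply,
    ContinuousLinearMap.proj_apply, smul_eq_mul]
  fin_cases j <;>
    simp [Pi.single_apply] <;> field_simp <;> ring

lemma hasFDerivAt_F {r : ℝ} {p : Fin 2 → ℝ} (h0 : p 0 ≠ 0) (h1 : p 1 ≠ 0) (j : Fin 2) :
    HasFDerivAt (fun q : Fin 2 → ℝ => (|q 0| ^ r + |q 1| ^ r) ^ (r⁻¹ - 1) * (|q j| ^ (r - 2) * q j))
      ( ((|p 0| ^ r + |p 1| ^ r) ^ (r⁻¹ - 1)) • (((r - 1) * |p j| ^ (r - 2)) • pr j)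
        + (|p j| ^ (r - 2) * p j) •
          (((r⁻¹ - 1) * (|p 0| ^ r + |p 1| ^ r) ^ (r⁻¹ - 2)) •
            ((r * (|p 0| ^ (r - 2) * p 0)) • pr 0 + (r * (|p 1| ^ (r - 2) * p 1)) • pr 1)) ) p := by
  have hs := spos (r := r) h0 h1
  have hG := (Real.hasDerivAt_rpow_const (p := r⁻¹ - 1) (Or.inl hs.ne')).comp_hasFDerivAt p
    (hasFDerivAt_S h0 h1)
  have hj : p j ≠ 0 := by fin_cases j <;> assumption
  have hH := (sgnpow_hasDerivAt (r := r) hj).comp_hasFDerivAt p ((pr j).hasFDerivAt)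
  have h := hG.mul hH
  simpa [pr, Function.comp, Pi.mul_def, show r⁻¹ - 1 - 1 = r⁻¹ - 2 by ring] using h

/-- The nonzero eigenvalue of the Hessian of the l^r-norm anisotropy at a unit vector n
with n₁ n₂ ≠ 0 is λ(n) = (r-1) |n₁ n₂|^{r-2} / γ(n)^{2r-1} ≥ 0: the tangent vector n^⊥
is an eigenvector of H_γ(n) with eigenvalue λ(n), and λ(n) ≥ 0 (weak anisotropy). -/
theorem lr_hessian_eigenvalue (r : ℝ) (hr : 2 ≤ r) (n : Fin 2 → ℝ)
    (hn : n ⬝ᵥ n = 1) (hn12 : n 0 * n 1 ≠ 0) :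
    (Matrix.of fun i j =>
        fderiv ℝ (fun p => fderiv ℝ (gamlr r) p (Pi.single j 1)) n (Pi.single i 1)).mulVec
      (perp n)
      = ((r - 1) * |n 0 * n 1| ^ (r - 2) / gamlr r n ^ (2 * r - 1)) • perp n ∧
    0 ≤ (r - 1) * |n 0 * n 1| ^ (r - 2) / gamlr r n ^ (2 * r - 1) := by
  have hn0 : n 0 ≠ 0 := fun h => hn12 (by simp [h])
  have hn1 : n 1 ≠ 0 := fun h => hn12 (by simp [h])
  have hr0 : r ≠ 0 := by intro h; rw [h] at hr; linarith
  have hs : 0 < |n 0| ^ r + |n 1| ^ r := spos hn0 hn1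
  have hopen : IsOpen {p : Fin 2 → ℝ | p 0 ≠ 0 ∧ p 1 ≠ 0} :=
    (isOpen_compl_singleton.preimage (continuous_apply 0)).inter
      (isOpen_compl_singleton.preimage (continuous_apply 1))
  have hmem : {p : Fin 2 → ℝ | p 0 ≠ 0 ∧ p 1 ≠ 0} ∈ nhds n := hopen.mem_nhds ⟨hn0, hn1⟩
  have heq : ∀ j : Fin 2, (fun p => fderiv ℝ (gamlr r) p (Pi.single j 1)) =ᶠ[nhds n]
      (fun p => (|p 0| ^ r + |p 1| ^ r) ^ (r⁻¹ - 1) * (|p j| ^ (r - 2) * p j)) := fun j =>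
    Filter.eventuallyEq_of_mem hmem (fun p hp => fderiv_gam_apply hr0 hp.1 hp.2 j)
  have hentry : ∀ i j : Fin 2,
      fderiv ℝ (fun p => fderiv ℝ (gamlr r) p (Pi.single j 1)) n (Pi.single i 1)
        = (1 - r) * (|n 0| ^ r + |n 1| ^ r) ^ (r⁻¹ - 2) * (|n i| ^ (r - 2) * n i)
            * (|n j| ^ (r - 2) * n j)
          + (if i = j then (r - 1) * (|n 0| ^ r + |n 1| ^ r) ^ (r⁻¹ - 1) * |n j| ^ (r - 2)
             else 0) := by
    intro i j
    rw [(heq j).fderiv_eq, (hasFDerivAt_F hn0 hn1 j).fderiv]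
    simp only [ContinuousLinearMap.add_apply, ContinuousLinearMap.coe_smul', Pi.smul_apply,
      pr, ContinuousLinearMap.proj_apply, smul_eq_mul, Pi.single_apply]
    fin_cases i <;> fin_cases j <;> simp <;> field_simp <;> ring
  have hnn : n 0 * n 0 + n 1 * n 1 = 1 := by
    simpa [dotProduct, Fin.sum_univ_two] using hn
  have hA2 : |n 0| ^ r = |n 0| ^ (r - 2) * (n 0 * n 0) := by
    have h2 : |n 0| ^ (2:ℝ) = n 0 * n 0 := by rw [Real.rpow_two, sq_abs, sq]
    rw [← h2, ← Real.rpow_add (abs_pos.2 hn0)]; norm_num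
  have hB2 : |n 1| ^ r = |n 1| ^ (r - 2) * (n 1 * n 1) := by
    have h2 : |n 1| ^ (2:ℝ) = n 1 * n 1 := by rw [Real.rpow_two, sq_abs, sq]
    rw [← h2, ← Real.rpow_add (abs_pos.2 hn1)]; norm_num
  have hX : (|n 0| ^ r + |n 1| ^ r) ^ (r⁻¹ - 1)
      = (|n 0| ^ r + |n 1| ^ r) * (|n 0| ^ r + |n 1| ^ r) ^ (r⁻¹ - 2) := by
    rw [show r⁻¹ - 1 = 1 + (r⁻¹ - 2) by ring, Real.rpow_add hs, Real.rpow_one]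
  have habs : |n 0 * n 1| ^ (r - 2) = |n 0| ^ (r - 2) * |n 1| ^ (r - 2) := by
    rw [abs_mul, Real.mul_rpow (abs_nonneg _) (abs_nonneg _)]
  have hgam : gamlr r n ^ (2 * r - 1) = (|n 0| ^ r + |n 1| ^ r) ^ (2 - r⁻¹) := by
    show ((|n 0| ^ r + |n 1| ^ r) ^ r⁻¹) ^ (2 * r - 1) = _
    rw [← Real.rpow_mul hs.le]
    congr 1
    field_simp
  have hinv : (|n 0| ^ r + |n 1| ^ r) ^ (2 - r⁻¹) * (|n 0| ^ r + |n 1| ^ r) ^ (r⁻¹ - 2) = 1 := by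
    rw [← Real.rpow_add hs]; norm_num
  have hlam : (r - 1) * |n 0 * n 1| ^ (r - 2) / gamlr r n ^ (2 * r - 1)
      = (r - 1) * (|n 0| ^ (r - 2) * |n 1| ^ (r - 2)) * (|n 0| ^ r + |n 1| ^ r) ^ (r⁻¹ - 2) := by
    rw [hgam, habs, div_eq_iff (Real.rpow_pos_of_pos hs _).ne']
    linear_combination (-(r - 1) * (|n 0| ^ (r - 2) * |n 1| ^ (r - 2))) * hinv
  constructor
  · funext i
    fin_cases i <;>
      [skip; skip] <;>
      simp only [Matrix.mulVec, dotProduct, Fin.sum_univ_two, Matrix.of_apply, hentry,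
        perp, Pi.smul_apply, smul_eq_mul, Matrix.cons_val_zero, Matrix.cons_val_one,
        Matrix.head_cons, Fin.isValue, Fin.zero_eta, Fin.mk_one, ite_true, ite_false,
        if_true, if_false, reduceIte, zero_ne_one, one_ne_zero] <;>
      rw [hlam]
    · linear_combination ((r - 1) * |n 0| ^ (r - 2) * n 1) * hX
        + ((r - 1) * |n 0| ^ (r - 2) * (|n 0| ^ r + |n 1| ^ r) ^ (r⁻¹ - 2) * n 1) * hA2
        + ((r - 1) * |n 0| ^ (r - 2) * (|n 0| ^ r + |n 1| ^ r) ^ (r⁻¹ - 2) * n 1) * hB2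
        + ((r - 1) * |n 0| ^ (r - 2) * |n 1| ^ (r - 2) * (|n 0| ^ r + |n 1| ^ r) ^ (r⁻¹ - 2) * n 1) * hnn
    · linear_combination (-(r - 1) * |n 1| ^ (r - 2) * n 0) * hX
        + (-(r - 1) * |n 1| ^ (r - 2) * (|n 0| ^ r + |n 1| ^ r) ^ (r⁻¹ - 2) * n 0) * hA2
        + (-(r - 1) * |n 1| ^ (r - 2) * (|n 0| ^ r + |n 1| ^ r) ^ (r⁻¹ - 2) * n 0) * hB2
        + (-(r - 1) * |n 0| ^ (r - 2) * |n 1| ^ (r - 2) * (|n 0| ^ r + |n 1| ^ r) ^ (r⁻¹ - 2) * n 0) * hnn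
  · apply div_nonneg
    · exact mul_nonneg (by linarith) (Real.rpow_nonneg (abs_nonneg _) _)
    · exact Real.rpow_nonneg (Real.rpow_nonneg hs.le _) _
end
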